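/- Define g : [0, 1/2] → ℝ by g(w₁) = −0.1w₁² − 0.95w₁ + 1.475 − √((37/9)w₁² − (11/4)w₁ + 5/4). Then g attains its maximum on [0, 1/2] at an interior point w₁* ∈ (0, 1/2), i.e. neither endpoint is a maximizer. -/

import Mathlib

open Set

/-! A continuous function on `[0, 1/2]` has a maximizer there. Its value at `1/10` already beats
both endpoint values, so every maximizer is interior. -/

theorem exists_mem_Ioo_isMaxOn_Icc_of_lt {f : ℝ → ℝ} {a b c : ℝ}
    (hf : ContinuousOn f (Icc a b)) (hc : c ∈ Icc a b) (ha : f a < f c) (hb : f b < f c) :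
    ∃ x ∈ Ioo a b, IsMaxOn f (Icc a b) x := by
  obtain ⟨x, hx, hmax⟩ := isCompact_Icc.exists_isMaxOn ⟨c, hc⟩ hf
  have hcx : f c ≤ f x := hmax hc
  refine ⟨x, ⟨lt_of_le_of_ne hx.1 ?_, lt_of_le_of_ne hx.2 ?_⟩, hmax⟩
  · rintro rfl; linarith
  · rintro rfl; linarith

theorem stmt_10 :
    let g : ℝ → ℝ := fun w₁ =>
      -0.1 * w₁ ^ 2 - 0.95 * w₁ + 1.475 -
        Real.sqrt ((37 / 9) * w₁ ^ 2 - (11 / 4) * w₁ + 5 / 4)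
    ∃ x ∈ Set.Ioo (0 : ℝ) (1 / 2),
      (∀ y ∈ Set.Icc (0 : ℝ) (1 / 2), g y ≤ g x) ∧
      ¬ (∀ y ∈ Set.Icc (0 : ℝ) (1 / 2), g y ≤ g 0) ∧
      ¬ (∀ y ∈ Set.Icc (0 : ℝ) (1 / 2), g y ≤ g (1 / 2)) := by
  intro g
  have hc : (1 / 10 : ℝ) ∈ Icc (0 : ℝ) (1 / 2) := by norm_num
  have hg₀ : g 0 = 1.475 - √(5 / 4) := by simp only [g]; congr 2 <;> norm_num
  have hg₁ : g (1 / 10) = 1.379 - √(1829 / 1800) := by simp only [g]; congr 2 <;> norm_num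
  have hg₂ : g (1 / 2) = 0.975 - √(65 / 72) := by simp only [g]; congr 2 <;> norm_num
  have hsqrt₀ : (1.118 : ℝ) < √(5 / 4) := Real.lt_sqrt (by norm_num) |>.mpr (by norm_num)
  have hsqrt₁ : √(1829 / 1800 : ℝ) < 1.009 := Real.sqrt_lt' (by norm_num) |>.mpr (by norm_num)
  have hsqrt₂ : (0.95 : ℝ) < √(65 / 72) := Real.lt_sqrt (by norm_num) |>.mpr (by norm_num)
  have h₀ : g 0 < g (1 / 10) := by rw [hg₀, hg₁]; linarith
  have h₂ : g (1 / 2) < g (1 / 10) := by rw [hg₂, hg₁]; linarith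
  have hg : Continuous g := by fun_prop
  obtain ⟨x, hx, hmax⟩ := exists_mem_Ioo_isMaxOn_Icc_of_lt hg.continuousOn hc h₀ h₂
  exact ⟨x, hx, fun y hy => hmax hy, fun h => (h _ hc).not_gt h₀, fun h => (h _ hc).not_gt h₂⟩
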